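/- For any nonzero vectors x and y in a real normed linear space, ‖x+y‖ ≥ ‖x‖ + ‖y‖ − (2 − ‖x/‖x‖ + y/‖y‖‖)·max{‖x‖, ‖y‖}. -/
import Mathlib

lemma aux_maligranda {X : Type*} [NormedAddCommGroup X] [NormedSpace ℝ X]
    (x y : X) (hx : x ≠ 0) (hy : y ≠ 0) (h : ‖x‖ ≤ ‖y‖) :
    ‖x + y‖ ≥ ‖x‖ + ‖y‖ - (2 - ‖(1 / ‖x‖) • x + (1 / ‖y‖) • y‖) * ‖y‖ := by
  have hx0 : (0:ℝ) < ‖x‖ := norm_pos_iff.mpr hx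
  have hy0 : (0:ℝ) < ‖y‖ := norm_pos_iff.mpr hy
  set u := (1 / ‖x‖) • x + (1 / ‖y‖) • y with hu
  have key : ‖(‖y‖/‖x‖) • x + y‖ = ‖y‖ * ‖u‖ := by
    rw [← norm_smul_of_nonneg hy0.le u]
    congr 1
    rw [hu, smul_add, smul_smul, smul_smul, mul_one_div, mul_one_div,
      div_self hy0.ne', one_smul]
  have decomp : x + y = ((‖y‖/‖x‖) • x + y) - (‖y‖/‖x‖ - 1) • x := by
    rw [sub_smul, one_smul]; abel
  have tri : ‖(‖y‖/‖x‖) • x + y‖ - ‖(‖y‖/‖x‖ - 1) • x‖ ≤ ‖x + y‖ := by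
    rw [decomp]; exact norm_sub_norm_le _ _
  have h1 : (0:ℝ) ≤ ‖y‖/‖x‖ - 1 := by
    have : (1:ℝ) ≤ ‖y‖/‖x‖ := (one_le_div hx0).mpr h
    linarith
  have h2 : ‖(‖y‖/‖x‖ - 1) • x‖ = ‖y‖ - ‖x‖ := by
    rw [norm_smul_of_nonneg h1, sub_mul, one_mul, div_mul_cancel₀ _ hx0.ne']
  rw [key, h2] at tri
  nlinarith [norm_nonneg u]

theorem stmt_15 {X : Type*} [NormedAddCommGroup X] [NormedSpace ℝ X]
    (x y : X) (hx : x ≠ 0) (hy : y ≠ 0) :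
    ‖x + y‖ ≥ ‖x‖ + ‖y‖ - (2 - ‖(1 / ‖x‖) • x + (1 / ‖y‖) • y‖) * max ‖x‖ ‖y‖ := by
  rcases le_total ‖x‖ ‖y‖ with h | h
  · rw [max_eq_right h]
    exact aux_maligranda x y hx hy h
  · rw [max_eq_left h]
    have := aux_maligranda y x hy hx h
    rw [add_comm y x, add_comm ((1 / ‖y‖) • y)] at this
    linarith [this]
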